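/- arXiv:1708.05585 — 2 statements merged into one kernel-verified Lean document; each statement's English description precedes it below -/
import Mathlib

section
/- Let f(z) = ∑_{k=0}^∞ a_k z^k be analytic on the open unit disk D with |f(z)| < 1 for all z ∈ D. Then for every z ∈ D with |z| = r ≤ √5 - 2 one has |f(z)| + ∑_{k=1}^∞ |a_k| r^k ≤ 1; i.e., the Bohr–Rogosinski radius for N = 1 equals R_1 = √5 - 2. -/
/-!
Write `A = |a₀|`. Schwarz–Pick gives `|f(z)| ≤ (A + r) / (1 + A r)`. Wiener's inequality
`|a_k| ≤ 1 - A²` (`k ≥ 1`) is Schwarz–Pick for the derivative at `0` of `w ↦ ∑ₘ a_{mk} wᵐ`: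
this function is the average of `f` over the `k`-th roots of `w`, so it again maps the disk
into itself. Summing the geometric series bounds the left-hand side by
`(A + r) / (1 + A r) + (1 - A²) r / (1 - r)`, which is at most `1` as soon as
`(1 + A) r (1 + A r) ≤ (1 - r)²`; the worst case `A = 1` is `2 (1 + r) r ≤ (1 - r)²`.
-/

open Metric Set Complex Finset
open scoped ComplexConjugate

noncomputable def diskMobius (w z : ℂ) : ℂ := (z - w) / (1 - conj w * z)

theorem norm_one_sub_conj_mul_sq_sub_norm_sub_sq (w z : ℂ) :
    ‖1 - conj w * z‖ ^ 2 - ‖z - w‖ ^ 2 = (1 - ‖z‖ ^ 2) * (1 - ‖w‖ ^ 2) := by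
  simp only [Complex.sq_norm, normSq_apply, sub_re, sub_im, mul_re, mul_im, conj_re, conj_im,
    one_re, one_im]
  ring

theorem norm_sub_lt_norm_one_sub_conj_mul {w z : ℂ} (hw : ‖w‖ < 1) (hz : ‖z‖ < 1) :
    ‖z - w‖ < ‖1 - conj w * z‖ := by
  have hpos : 0 < (1 - ‖z‖ ^ 2) * (1 - ‖w‖ ^ 2) := by
    apply mul_pos <;> nlinarith [norm_nonneg z, norm_nonneg w]
  refine lt_of_pow_lt_pow_left₀ 2 (norm_nonneg _) ?_
  linarith [norm_one_sub_conj_mul_sq_sub_norm_sub_sq w z]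

theorem one_sub_conj_mul_ne_zero {w z : ℂ} (hw : ‖w‖ < 1) (hz : ‖z‖ < 1) :
    1 - conj w * z ≠ 0 :=
  norm_pos_iff.1 ((norm_nonneg _).trans_lt (norm_sub_lt_norm_one_sub_conj_mul hw hz))

theorem norm_diskMobius_lt_one {w z : ℂ} (hw : ‖w‖ < 1) (hz : ‖z‖ < 1) :
    ‖diskMobius w z‖ < 1 := by
  rw [diskMobius, norm_div, div_lt_one (norm_pos_iff.2 (one_sub_conj_mul_ne_zero hw hz))]
  exact norm_sub_lt_norm_one_sub_conj_mul hw hz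

@[simp]
theorem diskMobius_self (w : ℂ) : diskMobius w w = 0 := by
  simp [diskMobius]

theorem hasDerivAt_diskMobius_self {w : ℂ} (hw : ‖w‖ < 1) :
    HasDerivAt (diskMobius w) (1 - ‖w‖ ^ 2 : ℂ)⁻¹ w := by
  have hne := one_sub_conj_mul_ne_zero hw hw
  refine (((hasDerivAt_id' w).sub_const w).div
    (((hasDerivAt_id' w).const_mul (conj w)).const_sub 1) hne).congr_deriv ?_
  rw [conj_mul'] at hne ⊢
  field_simp
  ring

theorem norm_le_div_of_norm_diskMobius_le {w z : ℂ} {r : ℝ} (hw : ‖w‖ < 1) (hz : ‖z‖ < 1)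
    (hr : r ≤ 1) (h : ‖diskMobius w z‖ ≤ r) :
    ‖z‖ ≤ (‖w‖ + r) / (1 + ‖w‖ * r) := by
  set A := ‖w‖
  set x := ‖z‖
  set D := ‖1 - conj w * z‖
  have hD : 0 < D := norm_pos_iff.2 (one_sub_conj_mul_ne_zero hw hz)
  have hr0 : 0 ≤ r := (norm_nonneg _).trans h
  have hnum : ‖z - w‖ ≤ r * D := by
    rwa [diskMobius, norm_div, div_le_iff₀ hD] at h
  have hDlow : 1 - A * x ≤ D := by
    simpa [A, x, D, norm_mul] using norm_sub_norm_le (1 : ℂ) (conj w * z)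
  have hAx : A * x < 1 := by nlinarith [norm_nonneg w, norm_nonneg z]
  -- the pseudo-hyperbolic identity turns `h` into a quadratic inequality in `x`
  have hquad : (1 - A * x) ^ 2 * (1 - r ^ 2) ≤ (1 - x ^ 2) * (1 - A ^ 2) := by
    have hid : D ^ 2 - ‖z - w‖ ^ 2 = (1 - x ^ 2) * (1 - A ^ 2) :=
      norm_one_sub_conj_mul_sq_sub_norm_sub_sq w z
    have hnum2 : ‖z - w‖ ^ 2 ≤ r ^ 2 * D ^ 2 := by
      simpa [mul_pow] using pow_le_pow_left₀ (norm_nonneg _) hnum 2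
    have hD2 : (1 - A * x) ^ 2 ≤ D ^ 2 := pow_le_pow_left₀ (by linarith) hDlow 2
    nlinarith [mul_le_mul_of_nonneg_right hD2 (by nlinarith : (0:ℝ) ≤ 1 - r ^ 2)]
  rw [le_div_iff₀ (by positivity)]
  by_contra! hlt
  -- the quadratic factors as `((1 + A r) x - (A + r)) ((1 - A r) x - (A - r))`
  nlinarith [mul_nonneg hr0 (by linarith : (0:ℝ) ≤ 1 - A * x),
    mul_pos (by linarith : 0 < x * (1 + A * r) - (A + r))
      (by nlinarith [mul_nonneg hr0 (by linarith : (0:ℝ) ≤ 1 - A * x)] :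
        0 < x * (1 - A * r) - (A - r))]

section SchwarzPick

variable {g : ℂ → ℂ}

theorem differentiableOn_diskMobius_comp (hd : DifferentiableOn ℂ g (ball 0 1))
    (hg : MapsTo g (ball 0 1) (ball 0 1)) :
    DifferentiableOn ℂ (diskMobius (g 0) ∘ g) (ball 0 1) := by
  have hg0 : ‖g 0‖ < 1 := mem_ball_zero_iff.1 (hg (mem_ball_self one_pos))
  refine (hd.sub_const _).div ((differentiableOn_const _).sub
    ((differentiableOn_const _).mul hd)) fun z hz => ?_
  exact one_sub_conj_mul_ne_zero hg0 (mem_ball_zero_iff.1 (hg hz))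

theorem mapsTo_diskMobius_comp (hg : MapsTo g (ball 0 1) (ball 0 1)) :
    MapsTo (diskMobius (g 0) ∘ g) (ball 0 1) (ball 0 1) := fun _ hz =>
  mem_ball_zero_iff.2 <| norm_diskMobius_lt_one
    (mem_ball_zero_iff.1 (hg (mem_ball_self one_pos))) (mem_ball_zero_iff.1 (hg hz))

theorem norm_le_div_of_mapsTo_ball (hd : DifferentiableOn ℂ g (ball 0 1))
    (hg : MapsTo g (ball 0 1) (ball 0 1)) {z : ℂ} (hz : ‖z‖ < 1) :
    ‖g z‖ ≤ (‖g 0‖ + ‖z‖) / (1 + ‖g 0‖ * ‖z‖) := by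
  refine norm_le_div_of_norm_diskMobius_le (mem_ball_zero_iff.1 (hg (mem_ball_self one_pos)))
    (mem_ball_zero_iff.1 (hg (mem_ball_zero_iff.2 hz))) hz.le ?_
  exact Complex.norm_le_norm_of_mapsTo_ball (differentiableOn_diskMobius_comp hd hg)
    ((mapsTo_diskMobius_comp hg).mono_right ball_subset_closedBall) (diskMobius_self _) hz

theorem norm_deriv_le_one_sub_sq_of_mapsTo_ball (hd : DifferentiableOn ℂ g (ball 0 1))
    (hg : MapsTo g (ball 0 1) (ball 0 1)) : ‖deriv g 0‖ ≤ 1 - ‖g 0‖ ^ 2 := by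
  have hg0 : ‖g 0‖ < 1 := mem_ball_zero_iff.1 (hg (mem_ball_self one_pos))
  have hpos : 0 < 1 - ‖g 0‖ ^ 2 := by nlinarith [norm_nonneg (g 0)]
  have hderiv : HasDerivAt (diskMobius (g 0) ∘ g) ((1 - ‖g 0‖ ^ 2 : ℂ)⁻¹ * deriv g 0) 0 :=
    (hasDerivAt_diskMobius_self hg0).comp 0
      (hd.differentiableAt (ball_mem_nhds _ one_pos)).hasDerivAt
  have h := Complex.norm_deriv_le_one_of_mapsTo_ball (differentiableOn_diskMobius_comp hd hg)
    (by simpa using (mapsTo_diskMobius_comp hg).mono_right ball_subset_closedBall) one_pos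
  rw [hderiv.deriv, norm_mul, norm_inv, ← ofReal_pow, ← ofReal_one, ← ofReal_sub, norm_real,
    Real.norm_of_nonneg hpos.le, inv_mul_le_iff₀ hpos, mul_one] at h
  exact h

end SchwarzPick

section PowerSeries

variable {b : ℕ → ℂ} {g : ℂ → ℂ}

theorem eball_zero_one : eball (0 : ℂ) 1 = ball 0 1 := by
  rw [← ENNReal.coe_one, eball_coe, NNReal.coe_one]

theorem one_le_radius_ofScalars
    (hb : ∀ w ∈ ball (0 : ℂ) 1, Summable fun m => b m * w ^ m) :
    1 ≤ (FormalMultilinearSeries.ofScalars ℂ b).radius := by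
  refine ENNReal.le_of_forall_nnreal_lt fun ρ hρ => ?_
  have hρ1 : ‖(ρ : ℂ)‖ < 1 := by simpa using hρ
  refine FormalMultilinearSeries.le_radius_of_tendsto _ (l := 0) ?_
  simpa [FormalMultilinearSeries.ofScalars_norm] using
    (hb _ (mem_ball_zero_iff.2 hρ1)).tendsto_atTop_zero.norm

theorem hasFPowerSeriesOnBall_ofScalars
    (hb : ∀ w ∈ ball (0 : ℂ) 1, HasSum (fun m => b m * w ^ m) (g w)) :
    HasFPowerSeriesOnBall g (FormalMultilinearSeries.ofScalars ℂ b) 0 1 where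
  r_le := one_le_radius_ofScalars fun w hw => (hb w hw).summable
  r_pos := one_pos
  hasSum {y} hy := by
    rw [eball_zero_one] at hy
    simpa [FormalMultilinearSeries.ofScalars_apply_eq, mul_comm] using hb y hy

theorem differentiableOn_of_hasSum
    (hb : ∀ w ∈ ball (0 : ℂ) 1, HasSum (fun m => b m * w ^ m) (g w)) :
    DifferentiableOn ℂ g (ball 0 1) := by
  simpa [eball_zero_one] using (hasFPowerSeriesOnBall_ofScalars hb).differentiableOn

theorem apply_zero_of_hasSum (hb : ∀ w ∈ ball (0 : ℂ) 1, HasSum (fun m => b m * w ^ m) (g w)) :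
    g 0 = b 0 := by
  simpa using ((hasFPowerSeriesOnBall_ofScalars hb).coeff_zero fun _ => 0).symm

theorem norm_coeff_one_le_of_hasSum
    (hb : ∀ w ∈ ball (0 : ℂ) 1, HasSum (fun m => b m * w ^ m) (g w))
    (hg : MapsTo g (ball 0 1) (ball 0 1)) : ‖b 1‖ ≤ 1 - ‖b 0‖ ^ 2 := by
  have h1 : deriv g 0 = b 1 := by
    simpa using (hasFPowerSeriesOnBall_ofScalars hb).hasFPowerSeriesAt.deriv
  simpa [apply_zero_of_hasSum hb, h1] using
    norm_deriv_le_one_sub_sq_of_mapsTo_ball (differentiableOn_of_hasSum hb) hg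

end PowerSeries

theorem IsPrimitiveRoot.sum_pow_pow_eq {R : Type*} [CommRing R] [IsDomain R] {ω : R} {k : ℕ}
    (hω : IsPrimitiveRoot ω k) (n : ℕ) :
    ∑ j ∈ range k, (ω ^ j) ^ n = if k ∣ n then (k : R) else 0 := by
  simp_rw [← pow_mul, mul_comm _ n, pow_mul]
  split_ifs with hn
  · simp [(hω.pow_eq_one_iff_dvd n).2 hn]
  · have hne : ω ^ n - 1 ≠ 0 := sub_ne_zero.2 fun h => hn ((hω.pow_eq_one_iff_dvd n).1 h)
    have h := mul_geom_sum (ω ^ n) k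
    rw [← pow_mul, mul_comm n k, pow_mul, hω.pow_eq_one, one_pow, sub_self] at h
    exact (mul_eq_zero.1 h).resolve_left hne

theorem IsPrimitiveRoot.hasSum_coeff_mul_pow_mul {K : Type*} [Field K] [CharZero K]
    [TopologicalSpace K] [IsTopologicalRing K] {ω : K} {k : ℕ} (hω : IsPrimitiveRoot ω k)
    (hk : k ≠ 0) {a : ℕ → K} {ζ : K} {F : ℕ → K}
    (h : ∀ j ∈ range k, HasSum (fun n => a n * (ω ^ j * ζ) ^ n) (F j)) :
    HasSum (fun m => a (m * k) * (ζ ^ k) ^ m) ((k : K)⁻¹ * ∑ j ∈ range k, F j) := by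
  have hterm (n : ℕ) : ∑ j ∈ range k, a n * (ω ^ j * ζ) ^ n =
      if k ∣ n then (k : K) * (a n * ζ ^ n) else 0 := by
    simp_rw [mul_pow, ← mul_assoc, ← Finset.sum_mul, ← Finset.mul_sum, hω.sum_pow_pow_eq]
    split_ifs <;> ring
  have hS := hasSum_sum h
  simp_rw [hterm] at hS
  rw [← (mul_left_injective₀ (b := k) hk).hasSum_iff] at hS
  · refine (hS.mul_left (k : K)⁻¹).congr_fun fun m => ?_
    simp [hk, ← pow_mul, mul_comm]
  · rintro n hn
    rw [if_neg]
    rintro ⟨m, rfl⟩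
    exact hn ⟨m, mul_comm m k⟩

theorem norm_coeff_le_one_sub_sq {f : ℂ → ℂ} {a : ℕ → ℂ}
    (hsum : ∀ z ∈ ball (0 : ℂ) 1, HasSum (fun n => a n * z ^ n) (f z))
    (hf : MapsTo f (ball 0 1) (ball 0 1)) {k : ℕ} (hk : k ≠ 0) :
    ‖a k‖ ≤ 1 - ‖a 0‖ ^ 2 := by
  set ω := exp (2 * Real.pi * I / k)
  have hω : IsPrimitiveRoot ω k := isPrimitiveRoot_exp k hk
  have hrot (j : ℕ) {ζ : ℂ} (hζ : ζ ∈ ball (0 : ℂ) 1) : ω ^ j * ζ ∈ ball (0 : ℂ) 1 := by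
    simpa [norm_mul, hω.norm'_eq_one hk] using hζ
  have hroot {w : ℂ} (hw : w ∈ ball (0 : ℂ) 1) : w ^ (k⁻¹ : ℂ) ∈ ball (0 : ℂ) 1 := by
    rw [mem_ball_zero_iff, norm_cpow_inv_nat]
    exact Real.rpow_lt_one (norm_nonneg w) (mem_ball_zero_iff.1 hw) (by positivity)
  -- the average of `f` over the `k`-th roots of `w` is `∑ₘ a (m k) wᵐ`
  set g : ℂ → ℂ := fun w => (k : ℂ)⁻¹ * ∑ j ∈ range k, f (ω ^ j * w ^ (k⁻¹ : ℂ))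
  have hg : ∀ w ∈ ball (0 : ℂ) 1, HasSum (fun m => a (m * k) * w ^ m) (g w) := by
    intro w hw
    simpa [cpow_nat_inv_pow w hk] using
      hω.hasSum_coeff_mul_pow_mul hk fun j _ => hsum _ (hrot j (hroot hw))
  have hgmaps : MapsTo g (ball 0 1) (ball 0 1) := by
    intro w hw
    have := (convex_ball (0 : ℂ) 1).sum_mem (t := range k) (w := fun _ => (k : ℝ)⁻¹)
      (by intros; positivity) (by simp [hk]) fun j _ => hf (hrot j (hroot hw))
    simpa [g, Finset.mul_sum, Complex.real_smul] using this
  simpa using norm_coeff_one_le_of_hasSum hg hgmaps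

theorem tsum_mul_pow_succ_le {c : ℕ → ℝ} {C r : ℝ} (hc0 : ∀ k, 0 ≤ c k) (hc : ∀ k, c k ≤ C)
    (hr0 : 0 ≤ r) (hr1 : r < 1) : ∑' k, c k * r ^ (k + 1) ≤ C * r / (1 - r) := by
  have hgeom : HasSum (fun k => C * r ^ (k + 1)) (C * r / (1 - r)) :=
    ((hasSum_geometric_of_lt_one hr0 hr1).mul_left (C * r)).congr_fun fun k => by ring
  have hle (k : ℕ) : c k * r ^ (k + 1) ≤ C * r ^ (k + 1) :=
    mul_le_mul_of_nonneg_right (hc k) (by positivity)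
  exact hasSum_le hle
    (Summable.of_nonneg_of_le (fun k => by have := hc0 k; positivity) hle hgeom.summable).hasSum
    hgeom

theorem bohr_rogosinski_majorant_le_one {A r : ℝ} (hA0 : 0 ≤ A) (hA1 : A ≤ 1) (hr0 : 0 ≤ r)
    (hr1 : r < 1) (hr : 2 * (1 + r) * r ≤ (1 - r) ^ 2) :
    (A + r) / (1 + A * r) + (1 - A ^ 2) * r / (1 - r) ≤ 1 := by
  have hAr : 0 < 1 + A * r := by positivity
  have h1r : 0 < 1 - r := by linarith
  rw [div_add_div _ _ hAr.ne' h1r.ne', div_le_one (by positivity)]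
  -- after clearing denominators the gap is `(1 - A) ((1 - r)² - (1 + A) r (1 + A r))`
  have hgap : (1 + A) * r * (1 + A * r) ≤ (1 - r) ^ 2 := by
    nlinarith [mul_nonneg (mul_nonneg hr0 (sub_nonneg.2 hA1))
      (by positivity : 0 ≤ 1 + r * (2 + A))]
  nlinarith [mul_le_mul_of_nonneg_left hgap (sub_nonneg.2 hA1)]

theorem two_mul_one_add_mul_le_one_sub_sq {r : ℝ} (hr0 : 0 ≤ r) (hr : r ≤ Real.sqrt 5 - 2) :
    2 * (1 + r) * r ≤ (1 - r) ^ 2 := by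
  nlinarith [Real.sq_sqrt (show (0 : ℝ) ≤ 5 by norm_num), Real.sqrt_nonneg 5]

theorem bohr_rogosinski_radius_one_general (f : ℂ → ℂ) (a : ℕ → ℂ)
    (hsum : ∀ z ∈ ball (0:ℂ) 1, HasSum (fun k : ℕ => a k * z ^ k) (f z))
    (hbound : ∀ z ∈ ball (0:ℂ) 1, ‖f z‖ < 1)
    (r : ℝ) (hr : r ≤ Real.sqrt 5 - 2)
    (z : ℂ) (hz : ‖z‖ = r) :
    ‖f z‖ + ∑' k : ℕ, ‖a (k + 1)‖ * r ^ (k + 1) ≤ 1 := by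
  have hr0 : 0 ≤ r := hz ▸ norm_nonneg z
  have hr1 : r < 1 := by
    have : Real.sqrt 5 < 3 := (Real.sqrt_lt' (by norm_num)).2 (by norm_num)
    linarith
  have hmaps : MapsTo f (ball 0 1) (ball 0 1) := fun w hw => mem_ball_zero_iff.2 (hbound w hw)
  have hf0 : f 0 = a 0 := apply_zero_of_hasSum hsum
  have hA1 : ‖a 0‖ ≤ 1 := hf0 ▸ (hbound 0 (mem_ball_self one_pos)).le
  calc ‖f z‖ + ∑' k : ℕ, ‖a (k + 1)‖ * r ^ (k + 1)
      ≤ (‖a 0‖ + r) / (1 + ‖a 0‖ * r) + (1 - ‖a 0‖ ^ 2) * r / (1 - r) := by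
        gcongr
        · rw [← hf0, ← hz]
          exact norm_le_div_of_mapsTo_ball (differentiableOn_of_hasSum hsum) hmaps (hz ▸ hr1)
        · exact tsum_mul_pow_succ_le (fun _ => norm_nonneg _)
            (fun k => norm_coeff_le_one_sub_sq hsum hmaps k.succ_ne_zero) hr0 hr1
    _ ≤ 1 := bohr_rogosinski_majorant_le_one (norm_nonneg _) hA1 hr0 hr1
        (two_mul_one_add_mul_le_one_sub_sq hr0 hr)

/-- The Bohr–Rogosinski radius for `N = 1` is `√5 - 2`: if `f` is analytic on the unit
disk with `|f| < 1`, then `|f(z)| + ∑_{k=1}^∞ |a_k| r^k ≤ 1` whenever `|z| = r ≤ √5 - 2`. -/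
theorem bohr_rogosinski_radius_one (f : ℂ → ℂ) (a : ℕ → ℂ)
    (hf : AnalyticOn ℂ f (ball (0:ℂ) 1))
    (hsum : ∀ z ∈ ball (0:ℂ) 1, HasSum (fun k : ℕ => a k * z ^ k) (f z))
    (hbound : ∀ z ∈ ball (0:ℂ) 1, ‖f z‖ < 1)
    (r : ℝ) (hr : r ≤ Real.sqrt 5 - 2)
    (z : ℂ) (hz : ‖z‖ = r) :
    ‖f z‖ + ∑' k : ℕ, ‖a (k + 1)‖ * r ^ (k + 1) ≤ 1 :=
  bohr_rogosinski_radius_one_general f a hsum hbound r hr z hz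
end

section
/- For every λ > 16/9 there exist a function f analytic on the open unit disk D with |f(z)| ≤ 1 on D (one may take f(z) = (a-z)/(1-az) with a ∈ [0,1) close enough to 1) such that at r = 1/3 one has ∑_{k=0}^∞ |a_k| r^k + λ ∑_{k=1}^∞ k |a_k|^2 r^{2k} > 1, where a_k are the Taylor coefficients of f. Hence the constant 16/9 in the improved Bohr inequality ∑_{k=0}^∞ |a_k| r^k + (16/9)(S_r/π) ≤ 1 (r ≤ 1/3) cannot be improved. -/
/-!
For `0 ≤ a < 1` the Möbius map `(a - z) / (1 - a z)` has coefficients `a, -(1 - a²) a^(k-1)`,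
so at `r = 1/3` both sums are geometric: `∑ |a_k| r^k = 1 - 2 (1 - a)² / (3 - a)` and
`∑ k |a_k|² r^(2k) = 9 (1 - a²)² / (9 - a²)²`. Both deficits from the extremal values are of
order `(1 - a)²`, with ratio `2 (3 - a) (3 + a)² / (9 (1 + a)²) → 16/9` as `a → 1`; so for
`λ > 16/9` and `a` close to `1` the area term outweighs the loss in the Bohr sum.
-/

open Metric Filter Topology

theorem one_sub_ne_zero_of_norm_lt_one {R : Type*} [SeminormedRing R] [NormOneClass R] {x : R}
    (h : ‖x‖ < 1) : 1 - x ≠ 0 :=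
  sub_ne_zero.2 fun h' => by simp [← h'] at h

def mobiusCoeff (a : ℂ) : ℕ → ℂ
  | 0 => a
  | n + 1 => -(1 - a ^ 2) * a ^ n

theorem hasSum_mobiusCoeff_mul_pow {a z : ℂ} (h : ‖a * z‖ < 1) :
    HasSum (fun k => mobiusCoeff a k * z ^ k) ((a - z) / (1 - a * z)) := by
  have hne := one_sub_ne_zero_of_norm_lt_one h
  have htail : HasSum (fun k => mobiusCoeff a (k + 1) * z ^ (k + 1))
      (-(1 - a ^ 2) * z * (1 - a * z)⁻¹) :=
    ((hasSum_geometric_of_norm_lt_one h).mul_left (-(1 - a ^ 2) * z)).congr_fun fun k => by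
      simp only [mobiusCoeff]; ring
  convert htail.zero_add (f := fun k => mobiusCoeff a k * z ^ k) using 1
  simp only [mobiusCoeff, pow_zero, mul_one]
  field_simp
  ring

theorem Complex.normSq_one_sub_ofReal_mul_sub_normSq_sub (a : ℝ) (z : ℂ) :
    normSq (1 - a * z) - normSq (a - z) = (1 - a ^ 2) * (1 - normSq z) := by
  simp only [normSq_apply, sub_re, sub_im, mul_re, mul_im, ofReal_re, ofReal_im, one_re, one_im]
  ring

theorem norm_mobius_le_one {a : ℝ} (ha : |a| ≤ 1) {z : ℂ} (hz : ‖z‖ ≤ 1) :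
    ‖(a - z) / (1 - a * z)‖ ≤ 1 := by
  have h1 : 0 ≤ 1 - a ^ 2 := by nlinarith [sq_abs a, abs_nonneg a]
  have h2 : 0 ≤ 1 - Complex.normSq z := by
    rw [Complex.normSq_eq_norm_sq]; nlinarith [norm_nonneg z]
  have hsq : ‖(a : ℂ) - z‖ ^ 2 ≤ ‖1 - a * z‖ ^ 2 := by
    simp only [← Complex.normSq_eq_norm_sq]
    nlinarith [Complex.normSq_one_sub_ofReal_mul_sub_normSq_sub a z, mul_nonneg h1 h2]
  rw [norm_div]
  exact div_le_one_of_le₀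
    ((pow_le_pow_iff_left₀ (norm_nonneg _) (norm_nonneg _) two_ne_zero).1 hsq) (norm_nonneg _)

theorem norm_mobiusCoeff_zero (a : ℝ) : ‖mobiusCoeff a 0‖ = |a| := Complex.norm_real a

theorem norm_mobiusCoeff_succ {a : ℝ} (ha : |a| ≤ 1) (n : ℕ) :
    ‖mobiusCoeff a (n + 1)‖ = (1 - a ^ 2) * |a| ^ n := by
  have h1 : 0 ≤ 1 - a ^ 2 := by nlinarith [sq_abs a, abs_nonneg a]
  have hc : (1 : ℂ) - (a : ℂ) ^ 2 = ((1 - a ^ 2 : ℝ) : ℂ) := by push_cast; ring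
  rw [mobiusCoeff, norm_mul, norm_neg, norm_pow, hc, Complex.norm_real, Complex.norm_real,
    Real.norm_of_nonneg h1, Real.norm_eq_abs]

theorem hasSum_norm_mobiusCoeff_mul_pow {a r : ℝ} (ha : |a| ≤ 1) (hr : 0 ≤ r)
    (har : |a| * r < 1) :
    HasSum (fun k => ‖mobiusCoeff a k‖ * r ^ k) (|a| + (1 - a ^ 2) * r / (1 - |a| * r)) := by
  have hg : ‖|a| * r‖ < 1 := by rwa [Real.norm_of_nonneg (by positivity)]
  have htail : HasSum (fun k => ‖mobiusCoeff a (k + 1)‖ * r ^ (k + 1))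
      ((1 - a ^ 2) * r * (1 - |a| * r)⁻¹) :=
    ((hasSum_geometric_of_norm_lt_one hg).mul_left ((1 - a ^ 2) * r)).congr_fun fun k => by
      rw [norm_mobiusCoeff_succ ha]; ring
  convert htail.zero_add (f := fun k => ‖mobiusCoeff a k‖ * r ^ k) using 1
  rw [pow_zero, mul_one, norm_mobiusCoeff_zero, div_eq_mul_inv]

theorem hasSum_mul_norm_mobiusCoeff_sq_mul_pow {a r : ℝ} (ha : |a| ≤ 1)
    (har : a ^ 2 * r ^ 2 < 1) :
    HasSum (fun k : ℕ => (k : ℝ) * ‖mobiusCoeff a k‖ ^ 2 * r ^ (2 * k))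
      ((1 - a ^ 2) ^ 2 * r ^ 2 / (1 - a ^ 2 * r ^ 2) ^ 2) := by
  have hg : ‖a ^ 2 * r ^ 2‖ < 1 := by rwa [Real.norm_of_nonneg (by positivity)]
  have htail : HasSum
      (fun k : ℕ => ((k + 1 : ℕ) : ℝ) * ‖mobiusCoeff a (k + 1)‖ ^ 2 * r ^ (2 * (k + 1)))
      ((1 - a ^ 2) ^ 2 * r ^ 2 / (1 - a ^ 2 * r ^ 2) ^ 2) := by
    have hgeom := (hasSum_choose_mul_geometric_of_norm_lt_one 1 hg).mul_left
      ((1 - a ^ 2) ^ 2 * r ^ 2)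
    rw [mul_one_div] at hgeom
    refine hgeom.congr_fun fun k => ?_
    rw [norm_mobiusCoeff_succ ha, Nat.choose_one_right, mul_pow, ← pow_mul, pow_mul' |a|, sq_abs]
    ring
  simpa using
    htail.zero_add (f := fun k : ℕ => (k : ℝ) * ‖mobiusCoeff a k‖ ^ 2 * r ^ (2 * k))

theorem exists_bohr_area_gap {lam : ℝ} (hlam : 16 / 9 < lam) :
    ∃ a ∈ Set.Ioo (0 : ℝ) 1, 2 * (3 - a) * (3 + a) ^ 2 < 9 * lam * (1 + a) ^ 2 := by
  have hcont :
      ContinuousAt (fun a : ℝ => 9 * lam * (1 + a) ^ 2 - 2 * (3 - a) * (3 + a) ^ 2) 1 := by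
    fun_prop
  -- at `a = 1` the gap is `36 λ - 64 > 0`
  have hpos :
      ∀ᶠ a in 𝓝[<] (1 : ℝ), 0 < 9 * lam * (1 + a) ^ 2 - 2 * (3 - a) * (3 + a) ^ 2 :=
    (hcont.eventually (lt_mem_nhds (by norm_num; linarith))).filter_mono nhdsWithin_le_nhds
  obtain ⟨a, hgap, ha⟩ := (hpos.and (Ioo_mem_nhdsLT zero_lt_one)).exists
  exact ⟨a, ha, by linarith⟩

theorem one_lt_bohr_area_sum_third {a lam : ℝ} (ha0 : 0 ≤ a) (ha1 : a < 1)
    (h : 2 * (3 - a) * (3 + a) ^ 2 < 9 * lam * (1 + a) ^ 2) :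
    1 < (|a| + (1 - a ^ 2) * (1 / 3) / (1 - |a| * (1 / 3))) +
      lam * ((1 - a ^ 2) ^ 2 * (1 / 3) ^ 2 / (1 - a ^ 2 * (1 / 3) ^ 2) ^ 2) := by
  have h3 : (0 : ℝ) < 3 - a := by linarith
  have hdiff : (|a| + (1 - a ^ 2) * (1 / 3) / (1 - |a| * (1 / 3))) +
      lam * ((1 - a ^ 2) ^ 2 * (1 / 3) ^ 2 / (1 - a ^ 2 * (1 / 3) ^ 2) ^ 2) - 1 =
      (1 - a) ^ 2 * (9 * lam * (1 + a) ^ 2 - 2 * (3 - a) * (3 + a) ^ 2) /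
        ((3 - a) ^ 2 * (3 + a) ^ 2) := by
    rw [abs_of_nonneg ha0]
    rw [show (1 : ℝ) - a ^ 2 * (1 / 3) ^ 2 = (3 - a) * (3 + a) / 9 by ring]
    field_simp
    ring
  have hpos : 0 < (1 - a) ^ 2 * (9 * lam * (1 + a) ^ 2 - 2 * (3 - a) * (3 + a) ^ 2) /
      ((3 - a) ^ 2 * (3 + a) ^ 2) :=
    div_pos (mul_pos (by nlinarith) (by linarith)) (by positivity)
  linarith

/-- Theorem 3, sharpness of the constant `16/9`: for every `λ > 16/9` there is an
analytic `f : 𝔻 → \overline{𝔻}` with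
`∑_{k=0}^∞ |a_k| (1/3)^k + λ ∑_{k=1}^∞ k |a_k|^2 (1/3)^{2k} > 1`. -/
theorem improved_bohr_area_third_sharp (lam : ℝ) (hlam : 16/9 < lam) :
    ∃ (f : ℂ → ℂ) (a : ℕ → ℂ),
      AnalyticOn ℂ f (ball (0:ℂ) 1) ∧
      (∀ z ∈ ball (0:ℂ) 1, HasSum (fun k : ℕ => a k * z ^ k) (f z)) ∧
      (∀ z ∈ ball (0:ℂ) 1, ‖f z‖ ≤ 1) ∧
      1 < (∑' k : ℕ, ‖a k‖ * (1/3 : ℝ) ^ k) +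
        lam * ∑' k : ℕ, (k : ℝ) * (‖a k‖) ^ 2 * (1/3 : ℝ) ^ (2 * k) := by
  obtain ⟨a, ⟨ha0, ha1⟩, hgap⟩ := exists_bohr_area_gap hlam
  have ha : |a| ≤ 1 := by rw [abs_of_pos ha0]; exact ha1.le
  have haz : ∀ z ∈ ball (0 : ℂ) 1, ‖(a : ℂ) * z‖ < 1 := fun z hz => by
    rw [mem_ball_zero_iff] at hz
    rw [norm_mul, Complex.norm_real, Real.norm_eq_abs]
    nlinarith [norm_nonneg z]
  refine ⟨fun z => (a - z) / (1 - a * z), mobiusCoeff a, ?_,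
    fun z hz => hasSum_mobiusCoeff_mul_pow (haz z hz),
    fun z hz => norm_mobius_le_one ha (mem_ball_zero_iff.1 hz).le, ?_⟩
  · refine (analyticOn_const.sub analyticOn_id).div
      (analyticOn_const.sub (analyticOn_const.mul analyticOn_id)) fun z hz =>
        one_sub_ne_zero_of_norm_lt_one (haz z hz)
  · have har : |a| * (1 / 3) < 1 := by rw [abs_of_pos ha0]; linarith
    rw [(hasSum_norm_mobiusCoeff_mul_pow ha (by norm_num) har).tsum_eq,
      (hasSum_mul_norm_mobiusCoeff_sq_mul_pow ha (by nlinarith)).tsum_eq]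
    exact one_lt_bohr_area_sum_third ha0.le ha1 hgap
end
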